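/- In the ring H = ℤ[c₁,c₂,s]/I with I generated by 2c₁c₂ - c₁³, c₁⁴ - c₂² + 3c₁²c₂, and s² - sc₁ + c₂, setting p = -s, g = -c₁, g_p = c₁² - c₂, g_s = -c₁c₂ (i.e. s₁c₂), one has p·g_p = p³ + g_s. -/

import Mathlib

open MvPolynomial

noncomputable def c₁ : MvPolynomial (Fin 3) ℤ := X 0
noncomputable def c₂ : MvPolynomial (Fin 3) ℤ := X 1
noncomputable def s : MvPolynomial (Fin 3) ℤ := X 2

noncomputable def I : Ideal (MvPolynomial (Fin 3) ℤ) :=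
  Ideal.span {2*c₁*c₂ - c₁^3, c₁^4 - c₂^2 + 3*c₁^2*c₂, s^2 - s*c₁ + c₂}

noncomputable def p : MvPolynomial (Fin 3) ℤ := -s
noncomputable def g : MvPolynomial (Fin 3) ℤ := -c₁
noncomputable def gₚ : MvPolynomial (Fin 3) ℤ := c₁^2 - c₂
noncomputable def gₛ : MvPolynomial (Fin 3) ℤ := -c₁*c₂

theorem s_sq_sub_s_mul_c₁_add_c₂_mem_I : s^2 - s*c₁ + c₂ ∈ I :=
  Ideal.subset_span (by simp)

theorem p_mul_gₚ_sub_p_pow_three_add_gₛ :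
    p * gₚ - (p^3 + gₛ) = (s + c₁) * (s^2 - s*c₁ + c₂) := by
  unfold p gₚ gₛ
  ring

/-- Schubert's formula II: p·g_p = p³ + g_s in H*(PS). -/
theorem stmt15 :
    Ideal.Quotient.mk I (p * gₚ) = Ideal.Quotient.mk I (p^3 + gₛ) := by
  rw [Ideal.Quotient.eq, p_mul_gₚ_sub_p_pow_three_add_gₛ]
  exact Ideal.mul_mem_left _ _ s_sq_sub_s_mul_c₁_add_c₂_mem_I
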